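/- (Failure to extrapolate linear targets without Layer Normalization.) Let the multi-head attention output be scalar-valued (d = 1), so Attn(x) = ∑_{h=1}^H A_{α_h}(x)·ζ_h with ζ_h ∈ ℝ, and set A = ∑_{h : α_h > 0} ζ_h + (1/(p+1))·∑_{h : α_h = 0} ζ_h. Then for every a ∈ ℝ with a ≠ A and every b ∈ ℝ, |Attn(x) − (a·x + b)| → +∞ as x → +∞; in particular, for every ε > 0 there exists x₀ ∈ ℝ such that |Attn(x) − (a·x + b)| > ε for all x ≥ x₀. -/

import Mathlib

open Filter Real
open scoped Classical

/-- Denominator of the softmax attention: `D_α(x) = exp(α x²) + ∑ₖ exp(α x xₖ)`. -/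
noncomputable def attnDenom (p : ℕ) (xs : Fin p → ℝ) (α : ℝ) (x : ℝ) : ℝ :=
  Real.exp (α * x ^ 2) + ∑ k, Real.exp (α * x * xs k)

/-- Single-head softmax attention output
`A_α(x) = (∑ⱼ xⱼ exp(α x xⱼ) + x exp(α x²)) / D_α(x)`. -/
noncomputable def attnOut (p : ℕ) (xs : Fin p → ℝ) (α : ℝ) (x : ℝ) : ℝ :=
  (∑ j, xs j * Real.exp (α * x * xs j) + x * Real.exp (α * x ^ 2)) / attnDenom p xs α x


/-- Scalar multi-head attention output `Attn(x) = ∑ₕ A_{αₕ}(x) · ζₕ` (case d = 1). -/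
noncomputable def multiAttnScalar (p : ℕ) (xs : Fin p → ℝ) (H : ℕ) (αs : Fin H → ℝ)
    (ζ : Fin H → ℝ) (x : ℝ) : ℝ :=
  ∑ h, attnOut p xs (αs h) x * ζ h

/-!
Writing the softmax weight of the query token as
`attnSelfWeight α x = (1 + ∑ₖ exp (α x (xₖ - x)))⁻¹`, one gets
`A_α(x) / x = attnSelfWeight α x + O(1/x)`, because the contribution of the context tokens is a
softmax average of the `xⱼ`, hence bounded. As `x → ∞` the exponents `α x (xₖ - x)` tend to `-∞`
for `α > 0` and to `+∞` for `α < 0`, so the self weight tends to `1`, `(p + 1)⁻¹` or `0` according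
to the sign of `α`. Hence `Attn(x) / x → A`, and `Attn(x) - (a x + b) = x (A - a + o(1))`
diverges in absolute value whenever `a ≠ A`.
-/

open Topology Finset

noncomputable def attnSelfWeight (p : ℕ) (xs : Fin p → ℝ) (α x : ℝ) : ℝ :=
  exp (α * x ^ 2) / attnDenom p xs α x

noncomputable def attnSlope (p : ℕ) (α : ℝ) : ℝ :=
  if 0 < α then 1 else if α = 0 then ((p : ℝ) + 1)⁻¹ else 0

section SingleHead

variable {p : ℕ} (xs : Fin p → ℝ) (α : ℝ)

lemma attnDenom_pos (x : ℝ) : 0 < attnDenom p xs α x := by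
  unfold attnDenom; positivity

lemma attnDenom_eq_mul (x : ℝ) :
    attnDenom p xs α x = exp (α * x ^ 2) * (1 + ∑ k, exp (α * x * (xs k - x))) := by
  simp only [attnDenom, mul_add, mul_one, mul_sum, ← exp_add]
  congr 2 with k
  ring_nf

lemma attnSelfWeight_eq_inv (x : ℝ) :
    attnSelfWeight p xs α x = (1 + ∑ k, exp (α * x * (xs k - x)))⁻¹ := by
  rw [attnSelfWeight, attnDenom_eq_mul, div_mul_eq_div_div, div_self (exp_ne_zero _), one_div]

lemma attnOut_eq_add (x : ℝ) :
    attnOut p xs α x =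
      (∑ j, xs j * exp (α * x * xs j)) / attnDenom p xs α x + x * attnSelfWeight p xs α x := by
  rw [attnOut, add_div, attnSelfWeight, mul_div_assoc]

lemma abs_context_div_attnDenom_le (x : ℝ) :
    |(∑ j, xs j * exp (α * x * xs j)) / attnDenom p xs α x| ≤ ∑ j, |xs j| := by
  have hD := attnDenom_pos xs α x
  rw [abs_div, abs_of_pos hD, div_le_iff₀ hD, sum_mul]
  refine (abs_sum_le_sum_abs _ _).trans (sum_le_sum fun j _ => ?_)
  rw [abs_mul, abs_of_pos (exp_pos _)]
  gcongr
  exact single_le_sum (f := fun k => exp (α * x * xs k)) (fun k _ => (exp_pos _).le)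
    (mem_univ j) |>.trans (le_add_of_nonneg_left (exp_pos _).le)

lemma tendsto_attnOut_div_sub_attnSelfWeight :
    Tendsto (fun x => attnOut p xs α x / x - attnSelfWeight p xs α x) atTop (𝓝 0) := by
  have hbdd : IsBoundedUnder (· ≤ ·) atTop
      (norm ∘ fun x => (∑ j, xs j * exp (α * x * xs j)) / attnDenom p xs α x) :=
    isBoundedUnder_of ⟨_, abs_context_div_attnDenom_le xs α⟩
  refine (tendsto_inv_atTop_zero.zero_mul_isBoundedUnder_le hbdd).congr' ?_
  filter_upwards [eventually_ne_atTop 0] with x hx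
  rw [attnOut_eq_add, add_div, mul_div_cancel_left₀ _ hx, add_sub_cancel_right, inv_mul_eq_div]

end SingleHead

lemma tendsto_mul_sub_self_atTop (c : ℝ) : Tendsto (fun x : ℝ => x * (x - c)) atTop atTop :=
  tendsto_id.atTop_mul_atTop₀ (tendsto_atTop_add_const_right _ _ tendsto_id)

lemma tendsto_exp_mul_sub_of_pos {α : ℝ} (hα : 0 < α) (c : ℝ) :
    Tendsto (fun x => exp (α * x * (c - x))) atTop (𝓝 0) := by
  have := (tendsto_mul_sub_self_atTop c).const_mul_atTop_of_neg (neg_neg_of_pos hα)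
  refine tendsto_exp_atBot.comp (this.congr fun x => ?_)
  ring

lemma tendsto_exp_mul_sub_of_neg {α : ℝ} (hα : α < 0) (c : ℝ) :
    Tendsto (fun x => exp (α * x * (c - x))) atTop atTop := by
  have := (tendsto_mul_sub_self_atTop c).const_mul_atTop (neg_pos_of_neg hα)
  refine tendsto_exp_atTop.comp (this.congr fun x => ?_)
  ring

lemma tendsto_attnSelfWeight {p : ℕ} (hp : 1 ≤ p) (xs : Fin p → ℝ) (α : ℝ) :
    Tendsto (attnSelfWeight p xs α) atTop (𝓝 (attnSlope p α)) := by
  simp only [funext (attnSelfWeight_eq_inv xs α), attnSlope]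
  rcases lt_trichotomy α 0 with hα | rfl | hα
  · rw [if_neg hα.not_gt, if_neg hα.ne]
    -- the context point `x₀` alone already outweighs the query token
    have hk := tendsto_exp_mul_sub_of_neg hα (xs ⟨0, hp⟩)
    refine (tendsto_atTop_mono (fun x => ?_) hk).inv_tendsto_atTop
    exact (single_le_sum (f := fun k => exp (α * x * (xs k - x))) (fun k _ => (exp_pos _).le)
      (mem_univ _)).trans (le_add_of_nonneg_left zero_le_one)
  · simp [add_comm]
  · rw [if_pos hα]
    have := tendsto_finsetSum univ fun k _ => tendsto_exp_mul_sub_of_pos hα (xs k)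
    simpa using (this.const_add 1).inv₀ (by simp)

lemma tendsto_attnOut_div {p : ℕ} (hp : 1 ≤ p) (xs : Fin p → ℝ) (α : ℝ) :
    Tendsto (fun x => attnOut p xs α x / x) atTop (𝓝 (attnSlope p α)) := by
  simpa using (tendsto_attnOut_div_sub_attnSelfWeight xs α).add (tendsto_attnSelfWeight hp xs α)

lemma tendsto_multiAttnScalar_div {p : ℕ} (hp : 1 ≤ p) (xs : Fin p → ℝ) {H : ℕ}
    (αs ζ : Fin H → ℝ) :
    Tendsto (fun x => multiAttnScalar p xs H αs ζ x / x) atTop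
      (𝓝 (∑ h, attnSlope p (αs h) * ζ h)) := by
  refine (tendsto_finsetSum univ fun h _ =>
    (tendsto_attnOut_div hp xs (αs h)).mul_const (ζ h)).congr fun x => ?_
  simp only [multiAttnScalar, sum_div, div_mul_eq_mul_div]

lemma sum_attnSlope_mul (p : ℕ) {H : ℕ} (αs ζ : Fin H → ℝ) :
    ∑ h, attnSlope p (αs h) * ζ h =
      (∑ h ∈ univ.filter fun h => 0 < αs h, ζ h) +
        ((p : ℝ) + 1)⁻¹ * ∑ h ∈ univ.filter fun h => αs h = 0, ζ h := by
  rw [sum_filter, sum_filter, mul_sum, ← sum_add_distrib]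
  refine sum_congr rfl fun h _ => ?_
  unfold attnSlope
  split_ifs with hpos hzero <;> first | exact absurd hzero hpos.ne' | ring

lemma tendsto_abs_sub_affine_atTop {f : ℝ → ℝ} {L a : ℝ}
    (hf : Tendsto (fun x => f x / x) atTop (𝓝 L)) (ha : a ≠ L) (b : ℝ) :
    Tendsto (fun x => |f x - (a * x + b)|) atTop atTop := by
  have hslope : Tendsto (fun x => |f x / x - a - b * x⁻¹|) atTop (𝓝 |L - a|) := by
    simpa using ((hf.sub_const a).sub (tendsto_inv_atTop_zero.const_mul b)).abs
  refine (tendsto_id.atTop_mul_pos (abs_pos.mpr (sub_ne_zero.mpr ha.symm)) hslope).congr' ?_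
  filter_upwards [eventually_gt_atTop 0] with x hx
  rw [id, ← abs_of_pos hx, ← abs_mul, abs_of_pos hx]
  congr 1
  field_simp
  ring

theorem stmt_15_general (p : ℕ) (hp : 1 ≤ p) (xs : Fin p → ℝ) (H : ℕ)
    (αs : Fin H → ℝ) (ζ : Fin H → ℝ) (A : ℝ)
    (hA : A = (∑ h ∈ Finset.univ.filter fun h => 0 < αs h, ζ h) +
      ((p : ℝ) + 1)⁻¹ * ∑ h ∈ Finset.univ.filter fun h => αs h = 0, ζ h) :
    ∀ a : ℝ, a ≠ A → ∀ b : ℝ,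
      Filter.Tendsto (fun x : ℝ => |multiAttnScalar p xs H αs ζ x - (a * x + b)|)
        Filter.atTop Filter.atTop ∧
      ∀ ε > 0, ∃ x₀ : ℝ, ∀ x ≥ x₀, ε < |multiAttnScalar p xs H αs ζ x - (a * x + b)| := by
  intro a ha b
  have hslope := tendsto_multiAttnScalar_div hp xs αs ζ
  rw [sum_attnSlope_mul, ← hA] at hslope
  have hdiv := tendsto_abs_sub_affine_atTop hslope ha b
  exact ⟨hdiv, fun ε _ => eventually_atTop.mp (hdiv.eventually_gt_atTop ε)⟩

theorem stmt_15 (p : ℕ) (hp : 1 ≤ p) (xs : Fin p → ℝ) (H : ℕ) (hH : 1 ≤ H)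
    (αs : Fin H → ℝ) (ζ : Fin H → ℝ) (A : ℝ)
    (hA : A = (∑ h ∈ Finset.univ.filter fun h => 0 < αs h, ζ h) +
      ((p : ℝ) + 1)⁻¹ * ∑ h ∈ Finset.univ.filter fun h => αs h = 0, ζ h) :
    ∀ a : ℝ, a ≠ A → ∀ b : ℝ,
      Filter.Tendsto (fun x : ℝ => |multiAttnScalar p xs H αs ζ x - (a * x + b)|)
        Filter.atTop Filter.atTop ∧
      ∀ ε > 0, ∃ x₀ : ℝ, ∀ x ≥ x₀, ε < |multiAttnScalar p xs H αs ζ x - (a * x + b)| :=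
  stmt_15_general p hp xs H αs ζ A hA
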